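/- Let d ≥ 1, w > 0, and let ν ∈ ℝ^d be a unit vector. Then ∫_{ℝ^d} ∂²₁G_w(z) · (ν·z)₊ dz = ν₁²/(2√(πw)), where ∂²₁G_w denotes the second partial derivative of G_w with respect to the first coordinate, ν₁ is the first component of ν, and (·)₊ denotes the positive part. -/

import Mathlib

open Real MeasureTheory
open scoped RealInnerProductSpace

/-- The `d`-dimensional heat kernel `G_t(z) = (4πt)^{-d/2} exp(-|z|²/(4t))`. -/
noncomputable def heatKE (d : ℕ) (t : ℝ) (z : EuclideanSpace ℝ (Fin d)) : ℝ :=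
  (4 * Real.pi * t) ^ (-(d : ℝ) / 2) * Real.exp (-‖z‖ ^ 2 / (4 * t))

/-!
Differentiating twice, `∂²_v G_w(z) = (⟪v, z⟫² / (4w²) - ‖v‖² / (2w)) G_w(z)`. A reflection
sending the basis vector `e₀` to `ν` preserves `G_w` and Lebesgue measure; it turns `(ν·z)₊` into
`(x₀)₊` and `v` into a vector `u` with `u₀ = ⟪ν, v⟫`. In coordinates `G_w(x) = ∏ₖ g_w(xₖ)` with
`g_w` the one-dimensional kernel, so once `⟪u, x⟫²` is expanded every term is a product of
one-dimensional Gaussian moments. With `c = (4πw)^{-1/2}`: the mixed terms vanish by oddness,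
`∫ xᵢ² (x₀)₊ G_w = 4w²c` for `i ≠ 0` and `8w²c` for `i = 0`, and `∫ (x₀)₊ G_w = 2wc`; hence the
integral is `(‖u‖² + u₀²) c - ‖u‖² c = u₀² c`.
-/

open Set

section GaussianMoments

theorem integral_eq_zero_of_odd {f : ℝ → ℝ} (hf : ∀ t, f (-t) = -f t) : ∫ t, f t = 0 := by
  have h : ∫ t, f (-t) = ∫ t, f t := integral_neg_eq_self f volume
  simp only [hf, integral_neg] at h
  linarith

theorem integral_max_mul_eq_setIntegral_Ioi (f : ℝ → ℝ) :
    ∫ t, max t 0 * f t = ∫ t in Ioi 0, t * f t := by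
  rw [← setIntegral_eq_integral_of_forall_compl_eq_zero fun t ht => by
    rw [max_eq_right (not_lt.mp ht), zero_mul]]
  exact setIntegral_congr_fun measurableSet_Ioi fun t ht => by rw [max_eq_left (le_of_lt ht)]

variable {b : ℝ}

theorem integral_Ioi_pow_mul_exp_neg_mul_sq (hb : 0 < b) (n : ℕ) :
    ∫ t in Ioi 0, t ^ n * exp (-b * t ^ 2)
      = b ^ (-((n : ℝ) + 1) / 2) / 2 * Gamma ((n + 1) / 2) := by
  have h := integral_rpow_mul_exp_neg_mul_rpow two_pos
    (by linarith [n.cast_nonneg (α := ℝ)] : (-1 : ℝ) < n) hb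
  simp only [rpow_natCast, rpow_ofNat] at h
  rw [h]; ring

theorem integrable_pow_mul_exp_neg_mul_sq (hb : 0 < b) (n : ℕ) :
    Integrable fun t : ℝ => t ^ n * exp (-b * t ^ 2) := by
  simpa using integrable_rpow_mul_exp_neg_mul_sq hb
    (by linarith [n.cast_nonneg (α := ℝ)] : (-1 : ℝ) < n)

theorem integrable_pow_mul_max_mul_exp_neg_mul_sq (hb : 0 < b) (n : ℕ) :
    Integrable fun t : ℝ => t ^ n * max t 0 * exp (-b * t ^ 2) := by
  refine (integrable_pow_mul_exp_neg_mul_sq hb (n + 1)).norm.mono' (by fun_prop)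
    (.of_forall fun t => ?_)
  have : |max t 0| ≤ |t| := by rcases le_total t 0 with h | h <;> simp [h, abs_nonneg]
  simp only [norm_mul, norm_pow, Real.norm_eq_abs, pow_succ]
  gcongr

theorem integral_sq_mul_exp_neg_mul_sq (hb : 0 < b) :
    ∫ t, t ^ 2 * exp (-b * t ^ 2) = √(π / b) / (2 * b) := by
  have h := integral_comp_abs (f := fun t => t ^ 2 * exp (-b * t ^ 2))
  simp only [sq_abs] at h
  rw [h, integral_Ioi_pow_mul_exp_neg_mul_sq hb 2]
  have hΓ : Gamma (((2 : ℕ) + 1) / 2) = √π / 2 := by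
    rw [show ((2 : ℕ) + 1) / 2 = (1 / 2 : ℝ) + 1 by norm_num, Gamma_add_one (by norm_num),
      Gamma_one_half_eq]; ring
  rw [hΓ, sqrt_div' _ hb.le, sqrt_eq_rpow,
    show -((2 : ℕ) + 1 : ℝ) / 2 = -(1 / 2) - 1 by norm_num, rpow_sub hb, rpow_neg hb.le, rpow_one,
    ← sqrt_eq_rpow]
  field_simp

theorem integral_max_mul_exp_neg_mul_sq (hb : 0 < b) :
    ∫ t, max t 0 * exp (-b * t ^ 2) = 1 / (2 * b) := by
  rw [integral_max_mul_eq_setIntegral_Ioi]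
  have h := integral_Ioi_pow_mul_exp_neg_mul_sq hb 1
  norm_num [rpow_neg_one] at h
  simp_rw [neg_mul]
  rw [h]; ring

theorem integral_sq_mul_max_mul_exp_neg_mul_sq (hb : 0 < b) :
    ∫ t, t ^ 2 * max t 0 * exp (-b * t ^ 2) = 1 / (2 * b ^ 2) := by
  simp_rw [mul_comm (_ ^ 2) (max _ _), mul_assoc]
  rw [integral_max_mul_eq_setIntegral_Ioi]
  have h := integral_Ioi_pow_mul_exp_neg_mul_sq hb 3
  norm_num [Gamma_two] at h
  simp_rw [← mul_assoc, ← pow_succ', neg_mul]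
  rw [h]; ring

end GaussianMoments

noncomputable def heatKernelReal (w t : ℝ) : ℝ :=
  (4 * π * w) ^ (-(1 : ℝ) / 2) * exp (-t ^ 2 / (4 * w))

section HeatKernelReal

variable {w : ℝ}

theorem heatKernelReal_eq (w t : ℝ) :
    heatKernelReal w t = (4 * π * w) ^ (-(1 : ℝ) / 2) * exp (-(4 * w)⁻¹ * t ^ 2) := by
  rw [heatKernelReal]
  congr 2
  ring

theorem rpow_neg_half_mul_sqrt_pi_div (hw : 0 < w) :
    (4 * π * w) ^ (-(1 : ℝ) / 2) * √(π / (4 * w)⁻¹) = 1 := by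
  rw [div_inv_eq_mul, show π * (4 * w) = 4 * π * w by ring, sqrt_eq_rpow,
    ← rpow_add (by positivity)]
  norm_num

theorem integrable_pow_mul_heatKernelReal (hw : 0 < w) (n : ℕ) :
    Integrable fun t => t ^ n * heatKernelReal w t := by
  simp_rw [heatKernelReal_eq, mul_left_comm _ ((4 * π * w) ^ (-(1 : ℝ) / 2))]
  exact (integrable_pow_mul_exp_neg_mul_sq (by positivity) n).const_mul _

theorem integrable_pow_mul_max_mul_heatKernelReal (hw : 0 < w) (n : ℕ) :
    Integrable fun t => t ^ n * max t 0 * heatKernelReal w t := by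
  simp_rw [heatKernelReal_eq, mul_left_comm _ ((4 * π * w) ^ (-(1 : ℝ) / 2))]
  exact (integrable_pow_mul_max_mul_exp_neg_mul_sq (by positivity) n).const_mul _

theorem integral_heatKernelReal (hw : 0 < w) : ∫ t, heatKernelReal w t = 1 := by
  simp_rw [heatKernelReal_eq]
  rw [integral_const_mul, integral_gaussian, rpow_neg_half_mul_sqrt_pi_div hw]

theorem integral_mul_heatKernelReal (w : ℝ) : ∫ t, t * heatKernelReal w t = 0 :=
  integral_eq_zero_of_odd fun t => by simp [heatKernelReal]

theorem integral_sq_mul_heatKernelReal (hw : 0 < w) :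
    ∫ t, t ^ 2 * heatKernelReal w t = 2 * w := by
  simp_rw [heatKernelReal_eq, mul_left_comm _ ((4 * π * w) ^ (-(1 : ℝ) / 2))]
  rw [integral_const_mul, integral_sq_mul_exp_neg_mul_sq (by positivity), mul_div_assoc',
    rpow_neg_half_mul_sqrt_pi_div hw]
  field_simp
  norm_num

theorem integral_max_mul_heatKernelReal (hw : 0 < w) :
    ∫ t, max t 0 * heatKernelReal w t = 2 * w * (4 * π * w) ^ (-(1 : ℝ) / 2) := by
  simp_rw [heatKernelReal_eq, mul_left_comm _ ((4 * π * w) ^ (-(1 : ℝ) / 2))]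
  rw [integral_const_mul, integral_max_mul_exp_neg_mul_sq (by positivity)]
  field_simp
  norm_num

theorem integral_sq_mul_max_mul_heatKernelReal (hw : 0 < w) :
    ∫ t, t ^ 2 * max t 0 * heatKernelReal w t = 8 * w ^ 2 * (4 * π * w) ^ (-(1 : ℝ) / 2) := by
  simp_rw [heatKernelReal_eq, mul_left_comm _ ((4 * π * w) ^ (-(1 : ℝ) / 2))]
  rw [integral_const_mul, integral_sq_mul_max_mul_exp_neg_mul_sq (by positivity)]
  field_simp
  ring

end HeatKernelReal

section ProductMoments

variable {d : ℕ} {w : ℝ}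

noncomputable def posPartFactor (w : ℝ) (i₀ k : Fin d) (t : ℝ) : ℝ :=
  (if k = i₀ then max t 0 else 1) * heatKernelReal w t

noncomputable def quadPosPartFactor (w : ℝ) (i j i₀ k : Fin d) (t : ℝ) : ℝ :=
  (if k = i then t else 1) * (if k = j then t else 1) * posPartFactor w i₀ k t

theorem prod_posPartFactor (i₀ : Fin d) (x : Fin d → ℝ) :
    ∏ k, posPartFactor w i₀ k (x k) = max (x i₀) 0 * ∏ k, heatKernelReal w (x k) := by
  simp only [posPartFactor, Finset.prod_mul_distrib, Finset.prod_ite_eq', Finset.mem_univ, if_true]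

theorem prod_quadPosPartFactor (i j i₀ : Fin d) (x : Fin d → ℝ) :
    ∏ k, quadPosPartFactor w i j i₀ k (x k)
      = x i * x j * (max (x i₀) 0 * ∏ k, heatKernelReal w (x k)) := by
  simp only [quadPosPartFactor, Finset.prod_mul_distrib, Finset.prod_ite_eq', Finset.mem_univ,
    if_true, prod_posPartFactor]

theorem integrable_pow_mul_posPartFactor (hw : 0 < w) (n : ℕ) (i₀ k : Fin d) :
    Integrable fun t => t ^ n * posPartFactor w i₀ k t := by
  simp only [posPartFactor, ← mul_assoc]
  split_ifs
  · exact integrable_pow_mul_max_mul_heatKernelReal hw n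
  · simpa using integrable_pow_mul_heatKernelReal hw n

theorem integrable_posPartFactor (hw : 0 < w) (i₀ k : Fin d) :
    Integrable (posPartFactor w i₀ k) := by
  simpa using integrable_pow_mul_posPartFactor hw 0 i₀ k

theorem integrable_quadPosPartFactor (hw : 0 < w) (i j i₀ k : Fin d) :
    Integrable (quadPosPartFactor w i j i₀ k) := by
  refine (integrable_pow_mul_posPartFactor hw
    ((if k = i then 1 else 0) + (if k = j then 1 else 0)) i₀ k).congr (.of_forall fun t => ?_)
  simp only [quadPosPartFactor]
  split_ifs <;> ring

theorem integral_max_mul_prod_heatKernelReal (hw : 0 < w) (i₀ : Fin d) :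
    ∫ x : Fin d → ℝ, max (x i₀) 0 * ∏ k, heatKernelReal w (x k)
      = 2 * w * (4 * π * w) ^ (-(1 : ℝ) / 2) := by
  simp_rw [← prod_posPartFactor, integral_fintype_prod_volume_eq_prod]
  rw [Finset.prod_eq_single i₀
    (fun k _ hk => by simp [posPartFactor, hk, integral_heatKernelReal hw]) (by simp)]
  simp [posPartFactor, integral_max_mul_heatKernelReal hw]

theorem integral_mul_mul_max_mul_prod_heatKernelReal (hw : 0 < w) (i j i₀ : Fin d) :
    ∫ x : Fin d → ℝ, x i * x j * (max (x i₀) 0 * ∏ k, heatKernelReal w (x k))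
      = if i = j then (if i = i₀ then 8 else 4) * w ^ 2 * (4 * π * w) ^ (-(1 : ℝ) / 2) else 0 := by
  simp_rw [← prod_quadPosPartFactor, integral_fintype_prod_volume_eq_prod]
  have hone : ∀ k, k ≠ i → k ≠ j → k ≠ i₀ → ∫ t, quadPosPartFactor w i j i₀ k t = 1 :=
    fun k hi hj h₀ => by
      simp [quadPosPartFactor, posPartFactor, hi, hj, h₀, integral_heatKernelReal hw]
  rcases eq_or_ne i j with rfl | hij
  · rcases eq_or_ne i i₀ with rfl | hi
    · rw [Finset.prod_eq_single i (fun k _ hk => hone k hk hk hk) (by simp)]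
      simp [quadPosPartFactor, posPartFactor, ← pow_two, ← mul_assoc,
        integral_sq_mul_max_mul_heatKernelReal hw]
    · rw [Finset.prod_eq_mul i i₀ hi (fun k _ hk => hone k hk.1 hk.1 hk.2) (by simp) (by simp)]
      simp only [quadPosPartFactor, posPartFactor, hi, Ne.symm hi, ↓reduceIte, one_mul, one_pow,
        ← pow_two, integral_sq_mul_heatKernelReal hw, integral_max_mul_heatKernelReal hw]
      ring
  · rw [if_neg hij]
    refine Finset.prod_eq_zero (i := if i = i₀ then j else i) (Finset.mem_univ _) ?_
    split_ifs with hi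
    · subst hi
      simp [quadPosPartFactor, posPartFactor, Ne.symm hij, integral_mul_heatKernelReal]
    · simp [quadPosPartFactor, posPartFactor, hij, hi, integral_mul_heatKernelReal]

theorem integrable_max_mul_prod_heatKernelReal (hw : 0 < w) (i₀ : Fin d) :
    Integrable fun x : Fin d → ℝ => max (x i₀) 0 * ∏ k, heatKernelReal w (x k) := by
  simpa only [prod_posPartFactor, ← volume_pi] using
    Integrable.fintype_prod (integrable_posPartFactor hw i₀)

theorem integrable_mul_mul_max_mul_prod_heatKernelReal (hw : 0 < w) (i j i₀ : Fin d) :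
    Integrable fun x : Fin d → ℝ => x i * x j * (max (x i₀) 0 * ∏ k, heatKernelReal w (x k)) := by
  simpa only [prod_quadPosPartFactor, ← volume_pi] using
    Integrable.fintype_prod (integrable_quadPosPartFactor hw i j i₀)

theorem sq_sum_mul_eq_sum_sum {ι R : Type*} [Fintype ι] [CommSemiring R] (x u : ι → R) (a : R) :
    (∑ k, x k * u k) ^ 2 * a = ∑ i, ∑ j, u i * u j * (x i * x j * a) := by
  rw [sq, Finset.sum_mul_sum, Finset.sum_mul]
  refine Finset.sum_congr rfl fun i _ => ?_
  rw [Finset.sum_mul]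
  exact Finset.sum_congr rfl fun j _ => by ring

theorem integral_quadratic_mul_prod_heatKernelReal_mul_max (hw : 0 < w) (u : Fin d → ℝ)
    (i₀ : Fin d) :
    ∫ x : Fin d → ℝ, ((∑ k, x k * u k) ^ 2 / (4 * w ^ 2) - (∑ k, u k ^ 2) / (2 * w))
        * (∏ k, heatKernelReal w (x k)) * max (x i₀) 0
      = u i₀ ^ 2 * (4 * π * w) ^ (-(1 : ℝ) / 2) := by
  set M := fun x : Fin d → ℝ => max (x i₀) 0 * ∏ k, heatKernelReal w (x k)
  have hxxM (i j : Fin d) : Integrable fun x => u i * u j * (x i * x j * M x) :=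
    (integrable_mul_mul_max_mul_prod_heatKernelReal hw i j i₀).const_mul _
  have hexpand (x : Fin d → ℝ) :
      ((∑ k, x k * u k) ^ 2 / (4 * w ^ 2) - (∑ k, u k ^ 2) / (2 * w))
          * (∏ k, heatKernelReal w (x k)) * max (x i₀) 0
        = (4 * w ^ 2)⁻¹ * ∑ i, ∑ j, u i * u j * (x i * x j * M x)
          - (∑ k, u k ^ 2) / (2 * w) * M x := by
    rw [← sq_sum_mul_eq_sum_sum]
    ring
  simp_rw [hexpand]
  rw [integral_sub ((integrable_finsetSum _ fun i _ => integrable_finsetSum _ fun j _ =>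
      hxxM i j).const_mul _) ((integrable_max_mul_prod_heatKernelReal hw i₀).const_mul _),
    integral_const_mul, integral_const_mul,
    integral_finsetSum _ fun i _ => integrable_finsetSum _ fun j _ => hxxM i j]
  simp_rw [integral_finsetSum _ fun j _ => hxxM _ j, integral_const_mul, M,
    integral_mul_mul_max_mul_prod_heatKernelReal hw, integral_max_mul_prod_heatKernelReal hw,
    mul_ite, mul_zero, Finset.sum_ite_eq, Finset.mem_univ, if_true]
  have hterm (i : Fin d) :
      u i * u i * ((if i = i₀ then 8 else 4) * w ^ 2 * (4 * π * w) ^ (-(1 : ℝ) / 2))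
        = 4 * w ^ 2 * (4 * π * w) ^ (-(1 : ℝ) / 2) * u i ^ 2
          + if i = i₀ then 4 * w ^ 2 * (4 * π * w) ^ (-(1 : ℝ) / 2) * u i ^ 2 else 0 := by
    split_ifs <;> ring
  simp_rw [hterm]
  rw [Finset.sum_add_distrib, ← Finset.mul_sum, Finset.sum_ite_eq', if_pos (Finset.mem_univ _)]
  field_simp
  ring

end ProductMoments

section HeatKE

variable {d : ℕ} {w : ℝ}

theorem heatKE_toLp (hw : 0 < w) (x : Fin d → ℝ) :
    heatKE d w (WithLp.toLp 2 x) = ∏ k, heatKernelReal w (x k) := by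
  simp only [heatKE, heatKernelReal, Finset.prod_mul_distrib, Finset.prod_const,
    Finset.card_univ, Fintype.card_fin, ← exp_sum, EuclideanSpace.norm_sq_eq, Real.norm_eq_abs,
    sq_abs, ← Finset.sum_div, ← Finset.sum_neg_distrib]
  rw [← rpow_natCast, ← rpow_mul (by positivity)]
  ring_nf

theorem hasFDerivAt_heatKE (d : ℕ) (w : ℝ) (y : EuclideanSpace ℝ (Fin d)) :
    HasFDerivAt (heatKE d w) ((-(2 * w)⁻¹ * heatKE d w y) • innerSL ℝ y) y := by
  have hG : heatKE d w
      = fun z => (4 * π * w) ^ (-(d : ℝ) / 2) * exp (-(4 * w)⁻¹ * ‖z‖ ^ 2) := by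
    funext z; simp only [heatKE]; ring_nf
  rw [hG]
  refine (((hasFDerivAt_id y).norm_sq.const_mul _).exp.const_mul _).congr_fderiv ?_
  ext v
  simp only [mul_inv_rev, id_eq, neg_mul, ContinuousLinearMap.comp_id, neg_smul, smul_neg,
    neg_apply, smul_apply, coe_innerSL_apply, nsmul_eq_mul, Nat.cast_ofNat, smul_eq_mul, neg_inj]
  ring

theorem fderiv_heatKE_apply (y v : EuclideanSpace ℝ (Fin d)) :
    fderiv ℝ (heatKE d w) y v = -(2 * w)⁻¹ * (heatKE d w y * ⟪v, y⟫) := by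
  rw [(hasFDerivAt_heatKE d w y).fderiv]
  simp only [FunLike.coe_smul, Pi.smul_apply, innerSL_apply_apply, smul_eq_mul, real_inner_comm]
  ring

theorem fderiv_fderiv_heatKE_apply (z v : EuclideanSpace ℝ (Fin d)) :
    fderiv ℝ (fun y => fderiv ℝ (heatKE d w) y v) z v
      = (⟪v, z⟫ ^ 2 / (4 * w ^ 2) - ‖v‖ ^ 2 / (2 * w)) * heatKE d w z := by
  simp_rw [fderiv_heatKE_apply]
  have h : HasFDerivAt (fun y => -(2 * w)⁻¹ * (heatKE d w y * ⟪v, y⟫)) _ z :=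
    ((hasFDerivAt_heatKE d w z).mul (innerSL ℝ v).hasFDerivAt).const_mul _
  rw [h.fderiv]
  simp only [mul_inv_rev, coe_innerSL_apply, real_inner_comm z v, neg_mul, neg_smul, smul_neg,
    smul_add, neg_neg, add_apply, neg_apply, smul_apply, inner_self_eq_norm_sq_to_K,
    ringHom_apply, smul_eq_mul]
  ring

theorem integral_quadratic_mul_heatKE_mul_max (hw : 0 < w) (u : EuclideanSpace ℝ (Fin d))
    (i₀ : Fin d) :
    ∫ x : EuclideanSpace ℝ (Fin d), (⟪u, x⟫ ^ 2 / (4 * w ^ 2) - ‖u‖ ^ 2 / (2 * w))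
        * heatKE d w x * max (x i₀) 0
      = u i₀ ^ 2 * (4 * π * w) ^ (-(1 : ℝ) / 2) := by
  rw [← (PiLp.volume_preserving_toLp (Fin d)).integral_comp
    (MeasurableEquiv.toLp 2 (Fin d → ℝ)).measurableEmbedding]
  simp only [heatKE_toLp hw, PiLp.inner_apply, RCLike.inner_apply, conj_trivial,
    EuclideanSpace.norm_sq_eq, Real.norm_eq_abs, sq_abs]
  exact integral_quadratic_mul_prod_heatKernelReal_mul_max hw u i₀

theorem integral_fderiv_fderiv_heatKE_mul_max_inner (hw : 0 < w) (i₀ : Fin d)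
    {ν : EuclideanSpace ℝ (Fin d)} (hν : ‖ν‖ = 1) (v : EuclideanSpace ℝ (Fin d)) :
    ∫ z, fderiv ℝ (fun y => fderiv ℝ (heatKE d w) y v) z v * max ⟪ν, z⟫ 0
      = ⟪ν, v⟫ ^ 2 * (4 * π * w) ^ (-(1 : ℝ) / 2) := by
  set e₀ : EuclideanSpace ℝ (Fin d) := EuclideanSpace.single i₀ 1
  set R := (ℝ ∙ (e₀ - ν))ᗮ.reflection
  have hR : R e₀ = ν := Submodule.reflection_sub (by simp [e₀, hν])
  simp_rw [fderiv_fderiv_heatKE_apply]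
  rw [← R.measurePreserving.integral_comp R.toHomeomorph.measurableEmbedding]
  have hcoord (x) : ⟪ν, R x⟫ = x i₀ := by
    rw [← hR, LinearIsometryEquiv.inner_map_map, EuclideanSpace.inner_single_left]; simp
  have hflip (x) : ⟪v, R x⟫ = ⟪R.symm v, x⟫ := by
    rw [real_inner_comm, R.inner_map_eq_flip, real_inner_comm]
  have hheat (x) : heatKE d w (R x) = heatKE d w x := by simp [heatKE]
  have hu : (R.symm v) i₀ = ⟪ν, v⟫ := by
    rw [← hR, R.inner_map_eq_flip, EuclideanSpace.inner_single_left]; simp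
  simp only [hcoord, hflip, hheat, ← R.symm.norm_map v]
  rw [integral_quadratic_mul_heatKE_mul_max hw, hu]

end HeatKE

/-- `∫ ∂²₁G_w(z)·(ν·z)₊ dz = ν₁²/(2√(πw))` for a unit vector `ν`. -/
theorem stmt_13 (d : ℕ) (hd : 1 ≤ d) (w : ℝ) (hw : 0 < w)
    (ν : EuclideanSpace ℝ (Fin d)) (hν : ‖ν‖ = 1) :
    ∫ z : EuclideanSpace ℝ (Fin d),
        (fderiv ℝ (fun y => fderiv ℝ (heatKE d w) y (EuclideanSpace.single ⟨0, hd⟩ 1)) z)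
            (EuclideanSpace.single ⟨0, hd⟩ 1) * max ⟪ν, z⟫ 0
      = (ν ⟨0, hd⟩) ^ 2 / (2 * Real.sqrt (Real.pi * w)) := by
  have hc : (4 * π * w) ^ (-(1 : ℝ) / 2) = 1 / (2 * √(π * w)) := by
    rw [neg_div, rpow_neg (by positivity), ← sqrt_eq_rpow,
      show 4 * π * w = 2 ^ 2 * (π * w) by ring, sqrt_mul (by positivity), sqrt_sq (by norm_num),
      one_div]
  rw [integral_fderiv_fderiv_heatKE_mul_max_inner hw ⟨0, hd⟩ hν,
    EuclideanSpace.inner_single_right, hc]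
  simp [div_eq_mul_inv]
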